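/- Let N ≥ W > L > 0 with 2L ≤ N, and let M = ⌈(N+W−1)/L⌉. There exist index sets K_0,…,K_{M−1} ⊆ {0,…,N−1} with Σ_{m=0}^{M−1} |K_m| = N+W−L, and a nonzero polynomial P in the 2(N+W) real variables given by the real and imaginary parts of the entries of (x,w) ∈ ℂ^N × ℂ^W, such that: for every pair (x,w) with P(x,w) ≠ 0 and every (x',w') ∈ ℂ^N × ℂ^W satisfying ŷ'[k,m] = ŷ[k,m] for all m = 0,…,M−1 and all k ∈ K_m, there exist nonzero complex numbers λ = (λ_0,…,λ_{L−1}) with (x',w') = λ∘(x,w). That is, a generic pair (x,w) is uniquely determined, modulo the scaling ambiguities, from N+W−L blind STFT measurements. -/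

import Mathlib

open Complex BigOperators

/-- Extension of a finite vector `w ∈ ℂ^W` to `ℤ` by zero outside `{0,…,W−1}`. -/
noncomputable def zext {W : ℕ} (w : Fin W → ℂ) (j : ℤ) : ℂ :=
  if h : 0 ≤ j ∧ j < (W : ℤ) then w ⟨j.toNat, by omega⟩ else 0

/-- The blind short-time Fourier transform
`ŷ[k,m] = Σ_{n=0}^{N−1} x[n]·w[mL−n]·e^{−2πikn/N}`. -/
noncomputable def stft {N W : ℕ} (x : Fin N → ℂ) (w : Fin W → ℂ)
    (L : ℕ) (k : ℤ) (m : ℕ) : ℂ :=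
  ∑ n : Fin N, x n * zext w ((m : ℤ) * L - (n : ℕ)) *
    Complex.exp (-(2 * (Real.pi : ℂ) * Complex.I * (k : ℂ) * ((n : ℕ) : ℂ)) / (N : ℂ))

/-- The `2(N+W)` real variables of a pair `(x,w) ∈ ℂ^N × ℂ^W`:
real and imaginary parts of all the entries. -/
noncomputable def realVars {N W : ℕ} (x : Fin N → ℂ) (w : Fin W → ℂ) :
    (Fin N ⊕ Fin W) × Bool → ℝ
  | (Sum.inl n, false) => (x n).re
  | (Sum.inl n, true) => (x n).im
  | (Sum.inr n, false) => (w n).re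
  | (Sum.inr n, true) => (w n).im

/-!
Let `ζ = e^{−2πi/N}` and `d_m[n] = x'[n]w'[mL−n] − x[n]w[mL−n]`. The measurements of window `m`
are `Σ_n d_m[n] (ζ^n)^k` for `k < |S_m|`; as the `ζ^n` are distinct, Vandermonde shows that
`d_m = 0` as soon as `d_m` is supported on `S_m`, and then `x'[n]w'[j] = x[n]w[j]` whenever
`n + j = mL`. Sweep through the windows, maintaining a scaling `λ` (with `λ_r = x'[r]/x[r]`)
that takes `(x, w)` to `(x', w')` on all indices `≤ (m−1)L`. It already accounts for the
products with `n, mL−n ≥ L`, so `S_m` only needs the `n` with `n` or `mL−n` in the new block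
`((m−1)L, mL]`, `N + W − L` indices over all windows; and since the other index is then `< L`,
where `x` and `w` are generically nonzero, the identities of window `m` extend `λ` to the block.
-/

open Finset

namespace BlindSTFT

lemma zext_natCast_of_lt {W : ℕ} (w : Fin W → ℂ) {n : ℕ} (h : n < W) :
    zext w n = w ⟨n, h⟩ := by
  rw [zext, dif_pos ⟨Int.natCast_nonneg n, by exact_mod_cast h⟩]
  rfl

lemma zext_natCast {W : ℕ} (w : Fin W → ℂ) (n : Fin W) : zext w (n : ℕ) = w n :=
  zext_natCast_of_lt w n.isLt

lemma zext_natCast_of_le {W : ℕ} (w : Fin W → ℂ) {n : ℕ} (h : W ≤ n) : zext w n = 0 := by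
  rw [zext, dif_neg (by omega)]

lemma zext_of_neg {W : ℕ} (w : Fin W → ℂ) {j : ℤ} (h : j < 0) : zext w j = 0 := by
  rw [zext, dif_neg (by omega)]

lemma zext_of_le {W : ℕ} (w : Fin W → ℂ) {j : ℤ} (h : W ≤ j) : zext w j = 0 := by
  rw [zext, dif_neg (by omega)]

lemma mod_eq_of_add_mod_eq_zero {L n j : ℕ} (hL : 0 < L) (h : (n + j) % L = 0) :
    (L - j % L) % L = n % L := by
  have hn := Nat.mod_lt n hL
  have hj := Nat.mod_lt j hL
  rw [Nat.add_mod] at h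
  rcases Nat.lt_or_ge (n % L + j % L) L with hlt | hge
  · rw [Nat.mod_eq_of_lt hlt] at h
    rw [show j % L = 0 by omega, show n % L = 0 by omega, Nat.sub_zero, Nat.mod_self]
  · rw [Nat.mod_eq_sub_mod hge, Nat.mod_eq_of_lt (by omega)] at h
    rw [show L - j % L = n % L by omega, Nat.mod_mod]

lemma add_sub_one_div_eq_iff {L n m : ℕ} (hL : 0 < L) :
    (n + L - 1) / L = m ↔ n ≤ m * L ∧ m * L < n + L := by
  rw [Nat.div_eq_iff hL]
  generalize m * L = t
  omega

/-- Each `n ∈ s` lies in exactly one block `((m−1)L, mL]`, namely `m = ⌈n/L⌉`. -/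
lemma sum_card_filter_block {L M : ℕ} (hL : 0 < L) {s : Finset ℕ}
    (hs : ∀ n ∈ s, n + L ≤ M * L) :
    ∑ m : Fin M, #{n ∈ s | n ≤ m * L ∧ m * L < n + L} = #s := by
  have hmaps : Set.MapsTo (fun n => (n + L - 1) / L) s (range M) := fun n hn => by
    have := hs n hn
    simp only [coe_range, Set.mem_Iio]
    rw [Nat.div_lt_iff_lt_mul hL]
    omega
  rw [card_eq_sum_card_fiberwise hmaps, ← Fin.sum_univ_eq_sum_range]
  simp only [add_sub_one_div_eq_iff hL]

def xBlock (N L m : ℕ) : Finset ℕ := {n ∈ range N | n ≤ m * L ∧ m * L < n + L}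

def wBlock (N W L m : ℕ) : Finset ℕ := {n ∈ range N | n < L ∧ n + L ≤ m * L ∧ m * L < n + W}

/-- This is `S_m` above: `xBlock` holds the `n` in the new block, `wBlock` those with `mL − n`
in it (and `≥ L`). -/
def windowSupport (N W L m : ℕ) : Finset ℕ := xBlock N L m ∪ wBlock N W L m

lemma windowSupport_subset_range (N W L m : ℕ) : windowSupport N W L m ⊆ range N :=
  union_subset (filter_subset _ _) (filter_subset _ _)

lemma card_windowSupport_le (N W L m : ℕ) : #(windowSupport N W L m) ≤ N :=
  (card_le_card (windowSupport_subset_range N W L m)).trans_eq (card_range N)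

lemma sum_card_xBlock {N L M : ℕ} (hL : 0 < L) (h : N + L ≤ M * L + 1) :
    ∑ m : Fin M, #(xBlock N L m) = N :=
  (sum_card_filter_block hL fun n hn => by rw [mem_range] at hn; omega).trans (card_range N)

lemma card_wBlock {N W L : ℕ} (hLN : L ≤ N) (m : ℕ) :
    #(wBlock N W L m) = #{j ∈ Ico L W | j ≤ m * L ∧ m * L < j + L} := by
  refine card_nbij' (m * L - ·) (m * L - ·) ?_ ?_ ?_ ?_ <;> intro n hn <;>
    simp only [wBlock, mem_coe, mem_filter, mem_range, mem_Ico] at hn ⊢ <;> omega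

lemma sum_card_wBlock {N W L M : ℕ} (hL : 0 < L) (hLN : L ≤ N) (h : W + L ≤ M * L + 1) :
    ∑ m : Fin M, #(wBlock N W L m) = W - L := by
  simp only [card_wBlock hLN]
  rw [sum_card_filter_block hL fun j hj => by rw [mem_Ico] at hj; omega, Nat.card_Ico]

lemma card_windowSupport (N W L m : ℕ) :
    #(windowSupport N W L m) = #(xBlock N L m) + #(wBlock N W L m) :=
  card_union_of_disjoint (disjoint_filter.2 fun _ _ hx hw => by omega)

lemma sum_card_windowSupport {N W L M : ℕ} (hL : 0 < L) (hLN : L ≤ N) (hLW : L ≤ W)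
    (h : N + W ≤ M * L + 1) : ∑ m : Fin M, #(windowSupport N W L m) = N + W - L := by
  simp only [card_windowSupport]
  rw [sum_add_distrib, sum_card_xBlock hL (by omega), sum_card_wBlock hL hLN (by omega)]
  omega

lemma eq_zero_of_sum_mul_pow_eq_zero {K ι : Type*} [Field K] {T : Finset ι} {u v : ι → K}
    (hv : Set.InjOn v T) (h : ∀ k < #T, ∑ i ∈ T, u i * v i ^ k = 0) : ∀ i ∈ T, u i = 0 := by
  let e := T.equivFin.symm
  have hzero : (fun a => u (e a)) = 0 := by
    refine Matrix.eq_zero_of_forall_pow_sum_mul_pow_eq_zero (f := fun a => v (e a)) ?_ ?_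
    · exact fun a b hab => e.injective (Subtype.ext (hv (e a).2 (e b).2 hab))
    · intro k
      rw [← h k k.isLt, ← sum_coe_sort T]
      exact e.sum_comp (fun t => u t * v t ^ (k : ℕ))
  intro i hi
  simpa [e] using congrFun hzero (e.symm ⟨i, hi⟩)

lemma isPrimitiveRoot_exp_neg (N : ℕ) (hN : N ≠ 0) :
    IsPrimitiveRoot (Complex.exp (-(2 * Real.pi * I / N))) N := by
  rw [Complex.exp_neg]
  exact (Complex.isPrimitiveRoot_exp N hN).inv

lemma stft_eq_sum_pow {N W : ℕ} (x : Fin N → ℂ) (w : Fin W → ℂ) (L k m : ℕ) :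
    stft x w L k m = ∑ n ∈ range N,
      zext x n * zext w ((m * L : ℕ) - n) * (Complex.exp (-(2 * Real.pi * I / N)) ^ n) ^ k := by
  rw [stft, ← Fin.sum_univ_eq_sum_range]
  refine sum_congr rfl fun n _ => ?_
  rw [zext_natCast, Nat.cast_mul, ← pow_mul, ← Complex.exp_nat_mul]
  congr 2
  push_cast
  ring

lemma zext_mul_eq_of_stft_eq {N W L m : ℕ} {x x' : Fin N → ℂ} {w w' : Fin W → ℂ}
    (hmeas : ∀ k < #(windowSupport N W L m), stft x' w' L k m = stft x w L k m)
    (hknown : ∀ n j : ℕ, n + j = m * L → L ≤ n → L ≤ j →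
      zext x' n * zext w' j = zext x n * zext w j) :
    ∀ n j : ℕ, n + j = m * L → zext x' n * zext w' j = zext x n * zext w j := by
  set S := windowSupport N W L m
  let d : ℕ → ℂ := fun n =>
    zext x' n * zext w' ((m * L : ℕ) - n) - zext x n * zext w ((m * L : ℕ) - n)
  have hoff : ∀ n ∈ range N, n ∉ S → d n = 0 := by
    intro n hn hnS
    simp only [S, windowSupport, xBlock, wBlock, mem_union, mem_filter, hn, true_and] at hnS
    rcases (by omega : m * L < n ∨ n + W ≤ m * L ∨ (L ≤ n ∧ n + L ≤ m * L)) with h | h | ⟨h1, h2⟩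
    · simp only [d, zext_of_neg _ (by omega : ((m * L : ℕ) : ℤ) - n < 0), mul_zero, sub_self]
    · simp only [d, zext_of_le _ (by omega : (W : ℤ) ≤ ((m * L : ℕ) : ℤ) - n), mul_zero,
        sub_self]
    · simp only [d]
      rw [show ((m * L : ℕ) : ℤ) - n = ((m * L - n : ℕ) : ℤ) by omega]
      exact sub_eq_zero.2 (hknown n (m * L - n) (by omega) h1 (by omega))
  have hS : ∀ n ∈ S, d n = 0 := by
    have hlt : ∀ n ∈ S, n < N := fun n hn => mem_range.1 (windowSupport_subset_range N W L m hn)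
    refine eq_zero_of_sum_mul_pow_eq_zero (v := (Complex.exp (-(2 * Real.pi * I / N)) ^ ·))
      (fun i hi j hj hij => (isPrimitiveRoot_exp_neg N (by have := hlt i hi; omega)).pow_inj
        (hlt i hi) (hlt j hj) hij) fun k hk => ?_
    rw [sum_subset (windowSupport_subset_range N W L m) fun n hn hnS => by
      rw [hoff n hn hnS, zero_mul]]
    simp only [d, sub_mul, sum_sub_distrib, ← stft_eq_sum_pow, hmeas k hk, sub_self]
  intro n j hnj
  by_cases hn : n < N
  · have hd : d n = 0 := by
      by_cases hnS : n ∈ S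
      exacts [hS n hnS, hoff n (mem_range.2 hn) hnS]
    simp only [d] at hd
    rwa [show ((m * L : ℕ) : ℤ) - n = j by omega, sub_eq_zero] at hd
  · simp [zext_natCast_of_le x (not_lt.1 hn), zext_natCast_of_le x' (not_lt.1 hn)]

noncomputable def normSqPoly {σ : Type*} (v : σ) : MvPolynomial (σ × Bool) ℝ :=
  .X (v, false) ^ 2 + .X (v, true) ^ 2

lemma eval_realVars_normSqPoly {N W : ℕ} (x : Fin N → ℂ) (w : Fin W → ℂ) (v : Fin N ⊕ Fin W) :
    MvPolynomial.eval (realVars x w) (normSqPoly v) = normSq (Sum.elim x w v) := by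
  rcases v with n | j <;> simp [normSqPoly, realVars, normSq_apply, sq]

noncomputable def leadingPoly (N W L : ℕ) : MvPolynomial ((Fin N ⊕ Fin W) × Bool) ℝ :=
  ∏ v ∈ univ.filter (fun v : Fin N ⊕ Fin W => Sum.elim Fin.val Fin.val v < L), normSqPoly v

lemma eval_realVars_leadingPoly {N W : ℕ} (x : Fin N → ℂ) (w : Fin W → ℂ) (L : ℕ) :
    MvPolynomial.eval (realVars x w) (leadingPoly N W L) =
      ∏ v ∈ univ.filter (fun v : Fin N ⊕ Fin W => Sum.elim Fin.val Fin.val v < L),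
        normSq (Sum.elim x w v) := by
  simp only [leadingPoly, map_prod, eval_realVars_normSqPoly]

lemma leadingPoly_ne_zero (N W L : ℕ) : leadingPoly N W L ≠ 0 := fun h => by
  simpa [eval_realVars_leadingPoly] using
    congrArg (MvPolynomial.eval (realVars (fun _ : Fin N => 1) (fun _ : Fin W => 1))) h

lemma zext_ne_zero_of_eval_leadingPoly_ne_zero {N W L : ℕ} (hLN : L ≤ N) (hLW : L ≤ W)
    {x : Fin N → ℂ} {w : Fin W → ℂ} (h : MvPolynomial.eval (realVars x w) (leadingPoly N W L) ≠ 0) :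
    (∀ r < L, zext x r ≠ 0) ∧ ∀ r < L, zext w r ≠ 0 := by
  rw [eval_realVars_leadingPoly, prod_ne_zero_iff] at h
  refine ⟨fun r hr => ?_, fun r hr => ?_⟩
  · rw [zext_natCast_of_lt x (by omega)]
    simpa using h (.inl ⟨r, by omega⟩) (by simpa using hr)
  · rw [zext_natCast_of_lt w (by omega)]
    simpa using h (.inr ⟨r, by omega⟩) (by simpa using hr)

section Propagation

variable {K : Type*} [Field K]

lemma mul_eq_of_mul_eq_mul {a a' b b' μ : K} (ha : a ≠ 0) (h : a' * b' = a * b)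
    (ha' : a' = μ * a) : μ * b' = b :=
  mul_left_cancel₀ ha (by rw [← h, ha']; ring)

lemma eq_mul_of_mul_eq_mul {a a' b b' μ : K} (hμ : μ ≠ 0) (hb : b ≠ 0) (h : a' * b' = a * b)
    (hb' : b' = μ⁻¹ * b) : a' = μ * a := by
  have : a' * μ⁻¹ = a := mul_right_cancel₀ hb (by rw [← h, hb']; ring)
  rw [← this]
  field_simp

/-- `c` is indexed by residues mod `L`; `(L - n % L) % L` is the residue of `-n`. -/
def ScaledUpTo (L : ℕ) (c a a' b b' : ℕ → K) (B : ℕ) : Prop :=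
  ∀ n ≤ B, a' n = c (n % L) * a n ∧ b' n = (c ((L - n % L) % L))⁻¹ * b n

variable {L : ℕ} {c a a' b b' : ℕ → K}

lemma ScaledUpTo.mul_eq_mul {B n j : ℕ} (hL : 0 < L) (hs : ScaledUpTo L c a a' b b' B)
    (hc : c (n % L) ≠ 0) (hn : n ≤ B) (hj : j ≤ B) (hnj : (n + j) % L = 0) :
    a' n * b' j = a n * b j := by
  rw [(hs n hn).1, (hs j hj).2, mod_eq_of_add_mod_eq_zero hL hnj]
  field_simp

lemma scaledUpTo_base (hL : 0 < L) (ha : ∀ r < L, a r ≠ 0) (hb : ∀ r < L, b r ≠ 0)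
    (h0 : a' 0 * b' 0 = a 0 * b 0) (h1 : ∀ n ≤ L, a' n * b' (L - n) = a n * b (L - n)) :
    (∀ r < L, a' r / a r ≠ 0) ∧ ScaledUpTo L (fun r => a' r / a r) a a' b b' L := by
  set c : ℕ → K := fun r => a' r / a r
  have hx : ∀ r < L, a' r = c r * a r := fun r hr => (div_mul_cancel₀ _ (ha r hr)).symm
  have hw0 : c 0 * b' 0 = b 0 := mul_eq_of_mul_eq_mul (ha 0 hL) h0 (hx 0 hL)
  have hw : ∀ j, 0 < j → j ≤ L → c (L - j) * b' j = b j := fun j hj0 hjL => by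
    have h := h1 (L - j) (Nat.sub_le L j)
    rw [Nat.sub_sub_self hjL] at h
    exact mul_eq_of_mul_eq_mul (ha _ (by omega)) h (hx _ (by omega))
  have hc : ∀ r < L, c r ≠ 0 := by
    intro r hr hcr
    rcases Nat.eq_zero_or_pos r with rfl | hr0
    · exact hb 0 hL (by rw [← hw0, hcr, zero_mul])
    · exact hb (L - r) (by omega) (by rw [← hw _ (by omega) (by omega), Nat.sub_sub_self hr.le,
        hcr, zero_mul])
  refine ⟨hc, fun n hn => ⟨?_, ?_⟩⟩
  · rcases hn.lt_or_eq with hn | rfl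
    · rw [Nat.mod_eq_of_lt hn]; exact hx n hn
    · have hb'0 : b' 0 = (c 0)⁻¹ * b 0 := (eq_inv_mul_iff_mul_eq₀ (hc 0 hL)).2 hw0
      rw [Nat.mod_self]
      exact eq_mul_of_mul_eq_mul (hc 0 hL) (hb 0 hL) (by simpa using h1 n le_rfl) hb'0
  · rcases Nat.eq_zero_or_pos n with rfl | hn0
    · rw [Nat.zero_mod, Nat.sub_zero, Nat.mod_self]
      exact (eq_inv_mul_iff_mul_eq₀ (hc 0 hL)).2 hw0
    · have hres : (L - n % L) % L = (L - n) % L :=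
        mod_eq_of_add_mod_eq_zero hL (by rw [Nat.sub_add_cancel hn, Nat.mod_self])
      rw [hres, Nat.mod_eq_of_lt (by omega)]
      exact (eq_inv_mul_iff_mul_eq₀ (hc _ (by omega))).2 (hw n hn0 hn)

lemma ScaledUpTo.extend {m : ℕ} (hL : 0 < L) (hm : L ≤ m * L) (ha : ∀ r < L, a r ≠ 0)
    (hb : ∀ r < L, b r ≠ 0) (hc : ∀ r < L, c r ≠ 0) (hs : ScaledUpTo L c a a' b b' (m * L))
    (hprod : ∀ n j, n + j = m * L + L → a' n * b' j = a n * b j) :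
    ScaledUpTo L c a a' b b' (m * L + L) := by
  intro n hn
  rcases le_or_gt n (m * L) with hle | hgt
  · exact hs n hle
  set k := m * L + L - n
  have hnk : (n + k) % L = 0 := by
    rw [Nat.add_sub_cancel' hn, ← add_one_mul, Nat.mul_mod_left]
  have hk : k < L := by omega
  constructor
  · have hbk := (hs k (by omega)).2
    rw [mod_eq_of_add_mod_eq_zero hL hnk] at hbk
    exact eq_mul_of_mul_eq_mul (hc _ (Nat.mod_lt _ hL)) (hb k hk) (hprod n k (by omega)) hbk
  · rw [mod_eq_of_add_mod_eq_zero hL (by rwa [add_comm] : (k + n) % L = 0),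
      eq_inv_mul_iff_mul_eq₀ (hc _ (Nat.mod_lt _ hL))]
    exact mul_eq_of_mul_eq_mul (ha k hk) (hprod k n (by omega)) (hs k (by omega)).1

theorem exists_scaledUpTo_of_window_products {M : ℕ} (hL : 0 < L) (hM : 2 ≤ M)
    (ha : ∀ r < L, a r ≠ 0) (hb : ∀ r < L, b r ≠ 0)
    (hwin : ∀ m < M, (∀ n j, n + j = m * L → L ≤ n → L ≤ j → a' n * b' j = a n * b j) →
      ∀ n j, n + j = m * L → a' n * b' j = a n * b j) :
    ∃ c : ℕ → K, (∀ r < L, c r ≠ 0) ∧ ScaledUpTo L c a a' b b' ((M - 1) * L) := by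
  have h0 := hwin 0 (by omega) (fun n j h _ _ => by simp at h; omega) 0 0 (by simp)
  have h1 : ∀ n ≤ L, a' n * b' (L - n) = a n * b (L - n) := fun n hn =>
    hwin 1 (by omega) (fun n j h _ _ => by simp at h; omega) n (L - n) (by simp; omega)
  obtain ⟨hc, hbase⟩ := scaledUpTo_base hL ha hb h0 h1
  refine ⟨_, hc, ?_⟩
  suffices ∀ m, 1 ≤ m → m < M → ScaledUpTo L _ a a' b b' (m * L) from
    this (M - 1) (by omega) (by omega)
  intro m hm
  induction m, hm using Nat.le_induction with
  | base => intro _; simpa using hbase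
  | succ m hm ih =>
    intro hmM
    have hs := ih (by omega)
    have hmL : L ≤ m * L := Nat.le_mul_of_pos_left L hm
    have hknown : ∀ n j, n + j = (m + 1) * L → L ≤ n → L ≤ j → a' n * b' j = a n * b j := by
      intro n j h hn hj
      refine hs.mul_eq_mul hL (hc _ (Nat.mod_lt _ hL)) ?_ ?_ (by rw [h, Nat.mul_mod_left]) <;>
        rw [add_one_mul] at h <;> omega
    rw [add_one_mul]
    exact hs.extend hL hmL ha hb hc fun n j hnj =>
      hwin (m + 1) hmM hknown n j (by rwa [add_one_mul])

end Propagation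

end BlindSTFT

open BlindSTFT

theorem blind_stft_uniqueness_optimal_general
    {N W L : ℕ} (hL : 0 < L) (hLW : L < W) (hWN : W ≤ N) :
    ∃ (K : Fin ((N + W - 1 + L - 1) / L) → Finset (Fin N))
      (P : MvPolynomial ((Fin N ⊕ Fin W) × Bool) ℝ),
      P ≠ 0 ∧
      (∑ m, (K m).card) = N + W - L ∧
      ∀ (x : Fin N → ℂ) (w : Fin W → ℂ),
        MvPolynomial.eval (realVars x w) P ≠ 0 →
        ∀ (x' : Fin N → ℂ) (w' : Fin W → ℂ),
          (∀ m : Fin ((N + W - 1 + L - 1) / L), ∀ k ∈ K m,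
            stft x' w' L ((k : ℕ) : ℤ) (m : ℕ) = stft x w L ((k : ℕ) : ℤ) (m : ℕ)) →
          ∃ lam : Fin L → ℂ, (∀ j, lam j ≠ 0) ∧
            (∀ n : Fin N, x' n = lam ⟨(n : ℕ) % L, Nat.mod_lt _ hL⟩ * x n) ∧
            (∀ n : Fin W, w' n = (lam ⟨(L - (n : ℕ) % L) % L, Nat.mod_lt _ hL⟩)⁻¹ * w n) := by
  set M := (N + W - 1 + L - 1) / L
  have hML : N + W ≤ M * L + 1 := by
    have : N + W - 1 + L - 1 < M * L + L := Nat.lt_div_mul_add hL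
    omega
  have hM : 2 ≤ M := Nat.le_of_mul_le_mul_right (by omega) hL
  have hM' : (M - 1) * L + L = M * L := by rw [← add_one_mul, Nat.sub_add_cancel (by omega)]
  have hK : ∀ m, ∀ k ∈ range #(windowSupport N W L m), k < N := fun m k hk =>
    (mem_range.1 hk).trans_le (card_windowSupport_le N W L m)
  refine ⟨fun m => (range #(windowSupport N W L m)).attachFin (hK m), leadingPoly N W L,
    leadingPoly_ne_zero N W L, ?_, ?_⟩
  · simp only [card_attachFin, card_range]
    exact sum_card_windowSupport hL (by omega) hLW.le hML
  intro x w hP x' w' hmeas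
  obtain ⟨hx, hw⟩ := zext_ne_zero_of_eval_leadingPoly_ne_zero (by omega) hLW.le hP
  obtain ⟨c, hc, hs⟩ := exists_scaledUpTo_of_window_products (a := fun n : ℕ => zext x n)
    (a' := fun n : ℕ => zext x' n) (b := fun n : ℕ => zext w n) (b' := fun n : ℕ => zext w' n)
    hL hM hx hw fun m hm => zext_mul_eq_of_stft_eq fun k hk =>
      hmeas ⟨m, hm⟩ ⟨k, hK m k (mem_range.2 hk)⟩ (by simpa [mem_attachFin] using hk)
  refine ⟨fun r => c r, fun r => hc r r.isLt, fun n => ?_, fun n => ?_⟩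
  · simpa only [zext_natCast] using (hs n (by omega)).1
  · simpa only [zext_natCast] using (hs n (by omega)).2

/-- a generic pair `(x,w)` is uniquely determined, modulo the
scaling ambiguities, from `N+W−L` blind STFT measurements, for suitably
chosen frequency sets `K_0,…,K_{M−1}`. -/
theorem blind_stft_uniqueness_optimal
    {N W L : ℕ} (hL : 0 < L) (hLW : L < W) (hWN : W ≤ N) (h2L : 2 * L ≤ N) :
    ∃ (K : Fin ((N + W - 1 + L - 1) / L) → Finset (Fin N))
      (P : MvPolynomial ((Fin N ⊕ Fin W) × Bool) ℝ),
      P ≠ 0 ∧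
      (∑ m, (K m).card) = N + W - L ∧
      ∀ (x : Fin N → ℂ) (w : Fin W → ℂ),
        MvPolynomial.eval (realVars x w) P ≠ 0 →
        ∀ (x' : Fin N → ℂ) (w' : Fin W → ℂ),
          (∀ m : Fin ((N + W - 1 + L - 1) / L), ∀ k ∈ K m,
            stft x' w' L ((k : ℕ) : ℤ) (m : ℕ) = stft x w L ((k : ℕ) : ℤ) (m : ℕ)) →
          ∃ lam : Fin L → ℂ, (∀ j, lam j ≠ 0) ∧
            (∀ n : Fin N, x' n = lam ⟨(n : ℕ) % L, Nat.mod_lt _ hL⟩ * x n) ∧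
            (∀ n : Fin W, w' n = (lam ⟨(L - (n : ℕ) % L) % L, Nat.mod_lt _ hL⟩)⁻¹ * w n) :=
  blind_stft_uniqueness_optimal_general hL hLW hWN
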